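/- arXiv:1307.6512 — 2 statements merged into one kernel-verified Lean document; each statement's English description precedes it below -/
import Mathlib

section
/- Let J be twice differentiable with J'' < 0 on [0,1], b₁ < b₂ in [0,1], and d(p‖a) = -J(p) + J(a) + (p-a)·J'(a). The unique minimizer over a ∈ [b₁, b₂] of max{d(b₁‖a), d(b₂‖a)} is the point a* satisfying J'(a*) = (J(b₂) - J(b₁))/(b₂ - b₁); at a*, d(b₁‖a*) = d(b₂‖a*). -/
/-!
Along `[b₁, b₂]` the divergence `d(b₁‖a)` strictly increases and `d(b₂‖a)` strictly
decreases in `a`, since `∂ₐ d(p‖a) = (p - a) J''(a)` and `J'' < 0`. Hence the maximum of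
the two is strictly minimised where they cross, and the slope condition on `J'(a*)` is
exactly the crossing equation `d(b₁‖a*) = d(b₂‖a*)`.
-/

open Set

/-- The Bregman divergence of the convex function `-J`, with `J'` the derivative of `J`. -/
def bregmanDiv (J J' : ℝ → ℝ) (p a : ℝ) : ℝ :=
  -J p + J a + (p - a) * J' a

section Bregman

variable {J J' J'' : ℝ → ℝ}

theorem hasDerivAt_bregmanDiv (p : ℝ) {x : ℝ} (hJ : HasDerivAt J (J' x) x)
    (hJ' : HasDerivAt J' (J'' x) x) :
    HasDerivAt (bregmanDiv J J' p) ((p - x) * J'' x) x := by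
  have hlin : HasDerivAt (fun a : ℝ => p - a) (-1) x := by
    simpa using (hasDerivAt_id x).const_sub p
  exact ((hJ.const_add (-J p)).add (hlin.mul hJ')).congr_deriv (by ring)

theorem bregmanDiv_eq_of_slope {p q a : ℝ} (hpq : p ≠ q)
    (hslope : J' a = (J q - J p) / (q - p)) :
    bregmanDiv J J' p a = bregmanDiv J J' q a := by
  have hne : q - p ≠ 0 := sub_ne_zero.mpr hpq.symm
  rw [bregmanDiv, bregmanDiv, hslope]
  field_simp
  ring

variable {p q : ℝ} (hJ : ∀ x ∈ Icc p q, HasDerivAt J (J' x) x)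
  (hJ' : ∀ x ∈ Icc p q, HasDerivAt J' (J'' x) x) (hJ'' : ∀ x ∈ Ioo p q, J'' x < 0)
include hJ hJ' hJ''

theorem strictMonoOn_bregmanDiv_left : StrictMonoOn (bregmanDiv J J' p) (Icc p q) := by
  refine strictMonoOn_of_deriv_pos (convex_Icc p q) ?_ fun x hx => ?_
  · exact fun x hx =>
      (hasDerivAt_bregmanDiv p (hJ x hx) (hJ' x hx)).continuousAt.continuousWithinAt
  rw [interior_Icc] at hx
  rw [(hasDerivAt_bregmanDiv p (hJ x (Ioo_subset_Icc_self hx))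
    (hJ' x (Ioo_subset_Icc_self hx))).deriv]
  exact mul_pos_of_neg_of_neg (sub_neg.mpr hx.1) (hJ'' x hx)

theorem strictAntiOn_bregmanDiv_right : StrictAntiOn (bregmanDiv J J' q) (Icc p q) := by
  refine strictAntiOn_of_deriv_neg (convex_Icc p q) ?_ fun x hx => ?_
  · exact fun x hx =>
      (hasDerivAt_bregmanDiv q (hJ x hx) (hJ' x hx)).continuousAt.continuousWithinAt
  rw [interior_Icc] at hx
  rw [(hasDerivAt_bregmanDiv q (hJ x (Ioo_subset_Icc_self hx))
    (hJ' x (Ioo_subset_Icc_self hx))).deriv]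
  exact mul_neg_of_pos_of_neg (sub_pos.mpr hx.2) (hJ'' x hx)

end Bregman

theorem max_lt_max_of_strictMonoOn_of_strictAntiOn {α β : Type*} [LinearOrder α]
    [LinearOrder β] {f g : α → β} {s : Set α} {a c : α} (hf : StrictMonoOn f s)
    (hg : StrictAntiOn g s) (hc : c ∈ s) (hfg : f c = g c) (ha : a ∈ s) (hac : a ≠ c) :
    max (f c) (g c) < max (f a) (g a) := by
  rw [← hfg, max_self]
  rcases hac.lt_or_gt with hlt | hlt
  · exact (hfg ▸ hg ha hc hlt).trans_le (le_max_right _ _)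
  · exact (hf hc ha hlt).trans_le (le_max_left _ _)

/-- With `J'' < 0` on `[0,1]` and `b₁ < b₂` in `[0,1]`, the unique minimizer over
`a ∈ [b₁,b₂]` of `max{d(b₁‖a), d(b₂‖a)}` is the point `a*` with
`J'(a*) = (J(b₂)-J(b₁))/(b₂-b₁)`; at `a*` the two endpoint divergences are equal. -/
theorem minimax_centroid_condition
    (J J' J'' : ℝ → ℝ)
    (hJ : ∀ x ∈ Set.Icc (0:ℝ) 1, HasDerivAt J (J' x) x)
    (hJ' : ∀ x ∈ Set.Icc (0:ℝ) 1, HasDerivAt J' (J'' x) x)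
    (hJ'' : ∀ x ∈ Set.Icc (0:ℝ) 1, J'' x < 0)
    (b₁ b₂ : ℝ) (hb₁ : b₁ ∈ Set.Icc (0:ℝ) 1) (hb₂ : b₂ ∈ Set.Icc (0:ℝ) 1)
    (hlt : b₁ < b₂)
    (d : ℝ → ℝ → ℝ)
    (hd : ∀ p a, d p a = -J p + J a + (p - a) * J' a)
    (astar : ℝ) (hastar : astar ∈ Set.Icc b₁ b₂)
    (hslope : J' astar = (J b₂ - J b₁) / (b₂ - b₁)) :
    d b₁ astar = d b₂ astar ∧
      ∀ a ∈ Set.Icc b₁ b₂, a ≠ astar →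
        max (d b₁ astar) (d b₂ astar) < max (d b₁ a) (d b₂ a) := by
  obtain rfl : d = bregmanDiv J J' := funext₂ hd
  have hsub : Icc b₁ b₂ ⊆ Icc 0 1 := Icc_subset_Icc hb₁.1 hb₂.2
  have hJb : ∀ x ∈ Icc b₁ b₂, HasDerivAt J (J' x) x := fun x hx => hJ x (hsub hx)
  have hJ'b : ∀ x ∈ Icc b₁ b₂, HasDerivAt J' (J'' x) x := fun x hx => hJ' x (hsub hx)
  have hJ''b : ∀ x ∈ Ioo b₁ b₂, J'' x < 0 :=
    fun x hx => hJ'' x (hsub (Ioo_subset_Icc_self hx))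
  have hcross := bregmanDiv_eq_of_slope hlt.ne hslope
  exact ⟨hcross, fun a ha hne => max_lt_max_of_strictMonoOn_of_strictAntiOn
    (strictMonoOn_bregmanDiv_left hJb hJ'b hJ''b)
    (strictAntiOn_bregmanDiv_right hJb hJ'b hJ''b) hastar hcross ha hne⟩
end

section
/- Let J be twice differentiable with J'' < 0 on [0,1] and J(0) = J(1) = 0. The single minimax decision weight a* = argmin_a max_{p ∈ [0,1]} d(p‖a), with d(p‖a) = -J(p) + J(a) + (p-a)·J'(a), is the unique maximizer of J, i.e., the point where J'(a*) = 0. -/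
/-- With `J'' < 0` on `[0,1]` and `J(0) = J(1) = 0`, the single (K = 1) minimax
decision weight `a* = argmin_a max_{p∈[0,1]} d(p‖a)` is the unique maximizer of `J`, i.e., the
point where `J'(a*) = 0`. -/
theorem single_cell_minimax_weight_is_peak
    (J J' J'' : ℝ → ℝ)
    (hJ : ∀ x ∈ Set.Icc (0:ℝ) 1, HasDerivAt J (J' x) x)
    (hJ' : ∀ x ∈ Set.Icc (0:ℝ) 1, HasDerivAt J' (J'' x) x)
    (hJ'' : ∀ x ∈ Set.Icc (0:ℝ) 1, J'' x < 0)
    (hJ0 : J 0 = 0) (hJ1 : J 1 = 0)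
    (d : ℝ → ℝ → ℝ)
    (hd : ∀ p a, d p a = -J p + J a + (p - a) * J' a) :
    ∃ astar ∈ Set.Ioo (0:ℝ) 1,
      J' astar = 0 ∧
      (∀ x ∈ Set.Icc (0:ℝ) 1, x ≠ astar → J x < J astar) ∧
      (∀ a ∈ Set.Icc (0:ℝ) 1, a ≠ astar →
        sSup ((fun p => d p astar) '' Set.Icc (0:ℝ) 1) <
          sSup ((fun p => d p a) '' Set.Icc (0:ℝ) 1)) := by
  have hJc : ContinuousOn J (Set.Icc 0 1) :=
    fun x hx => (hJ x hx).continuousAt.continuousWithinAt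
  have hJ'c : ContinuousOn J' (Set.Icc 0 1) :=
    fun x hx => (hJ' x hx).continuousAt.continuousWithinAt
  -- J' is strictly decreasing on [0,1]
  have hanti : StrictAntiOn J' (Set.Icc 0 1) := by
    apply strictAntiOn_of_hasDerivWithinAt_neg (f' := J'') (convex_Icc 0 1) hJ'c
    · intro x hx; rw [interior_Icc] at hx
      exact (hJ' x (Set.Ioo_subset_Icc_self hx)).hasDerivWithinAt
    · intro x hx; rw [interior_Icc] at hx
      exact hJ'' x (Set.Ioo_subset_Icc_self hx)
  -- Rolle: critical point
  obtain ⟨astar, hmem, hzero⟩ :=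
    exists_hasDerivAt_eq_zero (f := J) (f' := J') zero_lt_one hJc (hJ0.trans hJ1.symm)
      (fun x hx => hJ x (Set.Ioo_subset_Icc_self hx))
  have hmemI : astar ∈ Set.Icc (0:ℝ) 1 := Set.Ioo_subset_Icc_self hmem
  -- strict tangent inequality
  have htan : ∀ a ∈ Set.Icc (0:ℝ) 1, ∀ y ∈ Set.Icc (0:ℝ) 1, y ≠ a →
      J y < J a + (y - a) * J' a := by
    intro a ha y hy hne
    rcases lt_or_gt_of_ne hne with h | h
    · -- y < a, MVT on [y, a]
      obtain ⟨c, hc, hceq⟩ := exists_hasDerivAt_eq_slope J J' h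
        (hJc.mono (Set.Icc_subset_Icc hy.1 ha.2))
        (fun x hx => hJ x ⟨le_trans hy.1 hx.1.le, le_trans hx.2.le ha.2⟩)
      have hcI : c ∈ Set.Icc (0:ℝ) 1 := ⟨le_trans hy.1 hc.1.le, le_trans hc.2.le ha.2⟩
      have : J' a < J' c := hanti hcI ha hc.2
      have hslope : J' c = (J a - J y) / (a - y) := hceq
      have hay : (0:ℝ) < a - y := by linarith
      rw [hslope, lt_div_iff₀ hay] at this
      nlinarith
    · -- a < y, MVT on [a, y]
      obtain ⟨c, hc, hceq⟩ := exists_hasDerivAt_eq_slope J J' h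
        (hJc.mono (Set.Icc_subset_Icc ha.1 hy.2))
        (fun x hx => hJ x ⟨le_trans ha.1 hx.1.le, le_trans hx.2.le hy.2⟩)
      have hcI : c ∈ Set.Icc (0:ℝ) 1 := ⟨le_trans ha.1 hc.1.le, le_trans hc.2.le hy.2⟩
      have : J' c < J' a := hanti ha hcI hc.1
      have hslope : J' c = (J y - J a) / (y - a) := hceq
      have hay : (0:ℝ) < y - a := by linarith
      rw [hslope, div_lt_iff₀ hay] at this
      nlinarith
  -- strict maximum at astar
  have hmax : ∀ x ∈ Set.Icc (0:ℝ) 1, x ≠ astar → J x < J astar := by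
    intro x hx hne
    have := htan astar hmemI x hx hne
    rw [hzero] at this; linarith
  -- J ≥ 0 on [0,1]
  have hJnonneg : ∀ p ∈ Set.Icc (0:ℝ) 1, 0 ≤ J p := by
    intro p hp
    rcases eq_or_lt_of_le hp.1 with h0 | h0
    · rw [← h0, hJ0]
    rcases eq_or_lt_of_le hp.2 with h1 | h1
    · rw [h1, hJ1]
    have ht0 := htan p hp 0 (Set.left_mem_Icc.2 zero_le_one) (by linarith)
    have ht1 := htan p hp 1 (Set.right_mem_Icc.2 zero_le_one) (by linarith)
    rw [hJ0] at ht0; rw [hJ1] at ht1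
    nlinarith
  -- auxiliary functions: tangent values at endpoints
  have hg : StrictMonoOn (fun a => J a - a * J' a) (Set.Icc (0:ℝ) 1) := by
    apply strictMonoOn_of_hasDerivWithinAt_pos (f := fun a => J a - a * J' a)
      (f' := fun a => -a * J'' a) (convex_Icc 0 1)
      (by exact hJc.sub (continuousOn_id.mul hJ'c))
    · intro x hx; rw [interior_Icc] at hx
      have h1 := hJ x (Set.Ioo_subset_Icc_self hx)
      have h2 := hJ' x (Set.Ioo_subset_Icc_self hx)
      have hid : HasDerivAt (fun y : ℝ => y) 1 x := hasDerivAt_id x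
      have := h1.sub (hid.mul h2)
      have heq : J' x - (1 * J' x + x * J'' x) = -x * J'' x := by ring
      rw [heq] at this
      exact this.hasDerivWithinAt
    · intro x hx; rw [interior_Icc] at hx
      have := hJ'' x (Set.Ioo_subset_Icc_self hx)
      nlinarith [hx.1]
  have hh : StrictAntiOn (fun a => J a + (1 - a) * J' a) (Set.Icc (0:ℝ) 1) := by
    apply strictAntiOn_of_hasDerivWithinAt_neg (f := fun a => J a + (1 - a) * J' a)
      (f' := fun a => (1 - a) * J'' a) (convex_Icc 0 1)
      (by exact hJc.add ((continuousOn_const.sub continuousOn_id).mul hJ'c))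
    · intro x hx; rw [interior_Icc] at hx
      have h1 := hJ x (Set.Ioo_subset_Icc_self hx)
      have h2 := hJ' x (Set.Ioo_subset_Icc_self hx)
      have hid : HasDerivAt (fun y : ℝ => (1:ℝ) - y) (0 - 1) x :=
        (hasDerivAt_const x (1:ℝ)).sub (hasDerivAt_id x)
      have := h1.add (hid.mul h2)
      have heq : J' x + ((0 - 1) * J' x + (1 - x) * J'' x) = (1 - x) * J'' x := by ring
      rw [heq] at this
      exact this.hasDerivWithinAt
    · intro x hx; rw [interior_Icc] at hx
      have := hJ'' x (Set.Ioo_subset_Icc_self hx)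
      nlinarith [hx.2]
  refine ⟨astar, hmem, hzero, hmax, ?_⟩
  intro a ha hne
  -- sSup at astar equals J astar
  have hSstar : sSup ((fun p => d p astar) '' Set.Icc (0:ℝ) 1) = J astar := by
    have hub : ∀ y ∈ (fun p => d p astar) '' Set.Icc (0:ℝ) 1, y ≤ J astar := by
      rintro _ ⟨p, hp, rfl⟩
      show d p astar ≤ J astar
      rw [hd, hzero]
      have := hJnonneg p hp
      nlinarith
    apply le_antisymm
    · exact csSup_le ((Set.nonempty_Icc.2 zero_le_one).image _) hub
    · apply le_csSup ⟨J astar, hub⟩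
      refine ⟨0, Set.left_mem_Icc.2 zero_le_one, ?_⟩
      show d 0 astar = J astar
      rw [hd, hJ0, hzero]; ring
  rw [hSstar]
  have hbdd : BddAbove ((fun p => d p a) '' Set.Icc (0:ℝ) 1) := by
    have hcont : ContinuousOn (fun p => d p a) (Set.Icc (0:ℝ) 1) := by
      have : (fun p => d p a) = fun p => -J p + J a + (p - a) * J' a :=
        funext fun p => hd p a
      rw [this]
      exact (hJc.neg.add continuousOn_const).add
        ((continuousOn_id.sub continuousOn_const).mul continuousOn_const)
    exact (isCompact_Icc.image_of_continuousOn hcont).bddAbove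
  rcases lt_or_gt_of_ne hne with hlt | hgt
  · -- a < astar : use p = 1
    have h1 : J astar < d 1 a := by
      have := hh ha hmemI hlt
      simp only [hzero] at this
      rw [hd, hJ1]
      nlinarith
    calc J astar < d 1 a := h1
      _ ≤ _ := le_csSup hbdd ⟨1, Set.right_mem_Icc.2 zero_le_one, rfl⟩
  · -- astar < a : use p = 0
    have h0 : J astar < d 0 a := by
      have := hg hmemI ha hgt
      simp only [hzero] at this
      rw [hd, hJ0]
      nlinarith
    calc J astar < d 0 a := h0
      _ ≤ _ := le_csSup hbdd ⟨0, Set.left_mem_Icc.2 zero_le_one, rfl⟩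
end
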